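/- arXiv:1806.09462 — 5 statements merged into one kernel-verified Lean document; each statement's English description precedes it below -/
import Mathlib

section
/- Define T₁₂ = α T₁ + (1−α) T₂ + γ|u₁−u₂|² and T₂₁ = [ (1/3) ε m₁ (1−δ)( (m₁/m₂) ε (δ−1) + δ + 1 ) − ε γ ] |u₁−u₂|² + ε(1−α) T₁ + (1 − ε(1−α)) T₂, with ν₁₂ = ε ν₂₁, u₁₂ = δ u₁ + (1−δ) u₂, u₂₁ = u₂ − (m₁/m₂) ε (1−δ)(u₂−u₁). Then the total energy flux vanishes: ε ν₂₁ n₁ n₂ [ (m₁/2)(|u₁₂|² − |u₁|²) + (3/2)(T₁₂ − T₁) ] + ν₂₁ n₁ n₂ [ (m₂/2)(|u₂₁|² − |u₂|²) + (3/2)(T₂₁ − T₂) ] = 0. -/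
/-!
The velocity updates conserve momentum, `ε m₁ (u₁₂ - u₁) + m₂ (u₂₁ - u₂) = 0`, so the change of
kinetic energy is a multiple of `|u₁ - u₂|²` alone. The `|u₁ - u₂|²` coefficient in `T₂₁` is chosen
to cancel exactly that multiple, while the `γ`-terms and the `T₁, T₂`-terms of `T₁₂` and `T₂₁`
cancel pairwise.
-/

open scoped RealInnerProductSpace

section KineticEnergy

variable {E : Type*} [NormedAddCommGroup E] [InnerProductSpace ℝ E]

theorem norm_add_smul_sq_sub_norm_sq (u v : E) (t : ℝ) :
    ‖u + t • v‖ ^ 2 - ‖u‖ ^ 2 = 2 * t * ⟪u, v⟫ + t ^ 2 * ‖v‖ ^ 2 := by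
  rw [norm_add_sq_real, inner_smul_right, norm_smul, mul_pow, Real.norm_eq_abs, sq_abs]
  ring

theorem kinetic_energy_exchange {M₁ m₂ : ℝ} (hm₂ : m₂ ≠ 0) (u₁ u₂ : E) (t : ℝ) :
    M₁ / 2 * (‖u₁ - t • (u₁ - u₂)‖ ^ 2 - ‖u₁‖ ^ 2) +
        m₂ / 2 * (‖u₂ + (M₁ / m₂ * t) • (u₁ - u₂)‖ ^ 2 - ‖u₂‖ ^ 2) =
      M₁ * t * (t * (1 + M₁ / m₂) / 2 - 1) * ‖u₁ - u₂‖ ^ 2 := by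
  have hw : ⟪u₁, u₁ - u₂⟫ - ⟪u₂, u₁ - u₂⟫ = ‖u₁ - u₂‖ ^ 2 := by
    rw [← inner_sub_left, real_inner_self_eq_norm_sq]
  have hm : m₂ * (M₁ / m₂) = M₁ := mul_div_cancel₀ M₁ hm₂
  rw [sub_eq_add_neg u₁, ← neg_smul, norm_add_smul_sq_sub_norm_sq, norm_add_smul_sq_sub_norm_sq]
  linear_combination (-M₁ * t) * hw +
    (t * ⟪u₂, u₁ - u₂⟫ + M₁ / m₂ * t ^ 2 * ‖u₁ - u₂‖ ^ 2 / 2) * hm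

end KineticEnergy

theorem total_energy_flux_vanishes_general
    (m₁ m₂ n₁ n₂ ν₂₁ ε α γ δ T₁ T₂ : ℝ)
    (hm₂ : 0 < m₂)
    (u₁ u₂ : EuclideanSpace ℝ (Fin 3))
    (u₁₂ u₂₁ : EuclideanSpace ℝ (Fin 3))
    (hu₁₂ : u₁₂ = δ • u₁ + (1 - δ) • u₂)
    (hu₂₁ : u₂₁ = u₂ - ((m₁ / m₂) * ε * (1 - δ)) • (u₂ - u₁))
    (T₁₂ T₂₁ : ℝ)
    (hT₁₂ : T₁₂ = α * T₁ + (1 - α) * T₂ + γ * ‖u₁ - u₂‖^2)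
    (hT₂₁ : T₂₁ = ((1/3) * ε * m₁ * (1 - δ) * ((m₁ / m₂) * ε * (δ - 1) + δ + 1) - ε * γ)
        * ‖u₁ - u₂‖^2 + ε * (1 - α) * T₁ + (1 - ε * (1 - α)) * T₂) :
    ε * ν₂₁ * n₁ * n₂ * ((m₁ / 2) * (‖u₁₂‖^2 - ‖u₁‖^2) + (3/2) * (T₁₂ - T₁)) +
      ν₂₁ * n₁ * n₂ * ((m₂ / 2) * (‖u₂₁‖^2 - ‖u₂‖^2) + (3/2) * (T₂₁ - T₂)) = 0 := by
  have hu₁₂' : u₁₂ = u₁ - (1 - δ) • (u₁ - u₂) := by rw [hu₁₂]; module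
  have hu₂₁' : u₂₁ = u₂ + (ε * m₁ / m₂ * (1 - δ)) • (u₁ - u₂) := by rw [hu₂₁]; module
  have hkinetic := kinetic_energy_exchange (M₁ := ε * m₁) hm₂.ne' u₁ u₂ (1 - δ)
  rw [← hu₁₂', ← hu₂₁'] at hkinetic
  subst hT₁₂ hT₂₁
  linear_combination (ν₂₁ * n₁ * n₂) * hkinetic

theorem total_energy_flux_vanishes
    (m₁ m₂ n₁ n₂ ν₂₁ ε α γ δ T₁ T₂ : ℝ)
    (hm₁ : 0 < m₁) (hm₂ : 0 < m₂) (hn₁ : 0 < n₁) (hn₂ : 0 < n₂)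
    (hν : 0 < ν₂₁) (hε : 0 < ε) (hε1 : ε ≤ 1)
    (hα0 : 0 ≤ α) (hα1 : α ≤ 1) (hγ : 0 ≤ γ)
    (hT₁ : 0 < T₁) (hT₂ : 0 < T₂)
    (u₁ u₂ : EuclideanSpace ℝ (Fin 3))
    (ν₁₂ : ℝ) (hν₁₂ : ν₁₂ = ε * ν₂₁)
    (u₁₂ u₂₁ : EuclideanSpace ℝ (Fin 3))
    (hu₁₂ : u₁₂ = δ • u₁ + (1 - δ) • u₂)
    (hu₂₁ : u₂₁ = u₂ - ((m₁ / m₂) * ε * (1 - δ)) • (u₂ - u₁))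
    (T₁₂ T₂₁ : ℝ)
    (hT₁₂ : T₁₂ = α * T₁ + (1 - α) * T₂ + γ * ‖u₁ - u₂‖^2)
    (hT₂₁ : T₂₁ = ((1/3) * ε * m₁ * (1 - δ) * ((m₁ / m₂) * ε * (δ - 1) + δ + 1) - ε * γ)
        * ‖u₁ - u₂‖^2 + ε * (1 - α) * T₁ + (1 - ε * (1 - α)) * T₂) :
    ε * ν₂₁ * n₁ * n₂ * ((m₁ / 2) * (‖u₁₂‖^2 - ‖u₁‖^2) + (3/2) * (T₁₂ - T₁)) +
      ν₂₁ * n₁ * n₂ * ((m₂ / 2) * (‖u₂₁‖^2 - ‖u₂‖^2) + (3/2) * (T₂₁ - T₂)) = 0 :=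
  total_energy_flux_vanishes_general m₁ m₂ n₁ n₂ ν₂₁ ε α γ δ T₁ T₂ hm₂ u₁ u₂ u₁₂ u₂₁ hu₁₂ hu₂₁ T₁₂
    T₂₁ hT₁₂ hT₂₁
end

section
/- Under the assumptions 0 < ε ≤ 1, 0 ≤ α ≤ 1, γ ≥ 0, T₁, T₂ > 0, and 0 ≤ γ ≤ (m₁/3)(1−δ)[(1 + (m₁/m₂)ε)δ + 1 − (m₁/m₂)ε], the interspecies temperatures satisfy ε ln T₁₂ + ln T₂₁ ≥ ε ln T₁ + ln T₂, where T₁₂ = α T₁ + (1−α) T₂ + γ|u₁−u₂|² and T₂₁ = [ (1/3) ε m₁ (1−δ)( (m₁/m₂) ε (δ−1) + δ + 1 ) − ε γ ]|u₁−u₂|² + ε(1−α) T₁ + (1 − ε(1−α)) T₂. -/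
/-! Both `T₁₂` and `T₂₁` dominate convex combinations of `T₁` and `T₂` (the velocity terms carry
nonnegative coefficients), with weights `α` and `ε (1 - α)` on `T₁`. Concavity of `log` bounds
each log-temperature below; adding `ε` times the first bound to the second, the weights
recombine to `ε` on `log T₁` and `1` on `log T₂`. -/

open Real

theorem mul_log_add_mul_log_le_log {a x y z : ℝ} (ha₀ : 0 ≤ a) (ha₁ : a ≤ 1)
    (hx : 0 < x) (hy : 0 < y) (hz : a * x + (1 - a) * y ≤ z) :
    a * log x + (1 - a) * log y ≤ log z := by
  have hconc : a * log x + (1 - a) * log y ≤ log (a * x + (1 - a) * y) :=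
    strictConcaveOn_log_Ioi.concaveOn.2 hx hy ha₀ (by linarith) (by ring)
  have hmean_pos : 0 < a * x + (1 - a) * y := by
    rcases ha₀.eq_or_lt with rfl | ha
    · linarith
    · nlinarith
  exact hconc.trans (log_le_log hmean_pos hz)

theorem log_temperature_inequality_general
    (m₁ m₂ ε α γ δ T₁ T₂ : ℝ)
    (hε : 0 < ε) (hε1 : ε ≤ 1)
    (hα0 : 0 ≤ α) (hα1 : α ≤ 1)
    (hγ0 : 0 ≤ γ)
    (hγ : γ ≤ (m₁ / 3) * (1 - δ) * ((1 + (m₁ / m₂) * ε) * δ + 1 - (m₁ / m₂) * ε))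
    (hT₁ : 0 < T₁) (hT₂ : 0 < T₂)
    (u₁ u₂ : EuclideanSpace ℝ (Fin 3))
    (T₁₂ T₂₁ : ℝ)
    (hT₁₂ : T₁₂ = α * T₁ + (1 - α) * T₂ + γ * ‖u₁ - u₂‖^2)
    (hT₂₁ : T₂₁ = ((1/3) * ε * m₁ * (1 - δ) * ((m₁ / m₂) * ε * (δ - 1) + δ + 1) - ε * γ)
        * ‖u₁ - u₂‖^2 + ε * (1 - α) * T₁ + (1 - ε * (1 - α)) * T₂) :
    ε * Real.log T₁ + Real.log T₂ ≤ ε * Real.log T₁₂ + Real.log T₂₁ := by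
  have hcoef : 0 ≤ (1/3) * ε * m₁ * (1 - δ) * ((m₁ / m₂) * ε * (δ - 1) + δ + 1) - ε * γ := by
    have h : (1/3) * ε * m₁ * (1 - δ) * ((m₁ / m₂) * ε * (δ - 1) + δ + 1) - ε * γ
        = ε * ((m₁ / 3) * (1 - δ) * ((1 + (m₁ / m₂) * ε) * δ + 1 - (m₁ / m₂) * ε) - γ) := by
      ring
    rw [h]
    exact mul_nonneg hε.le (sub_nonneg.2 hγ)
  have hlog₁₂ : α * log T₁ + (1 - α) * log T₂ ≤ log T₁₂ :=
    mul_log_add_mul_log_le_log hα0 hα1 hT₁ hT₂ (hT₁₂ ▸ le_add_of_nonneg_right (by positivity))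
  have hlog₂₁ : ε * (1 - α) * log T₁ + (1 - ε * (1 - α)) * log T₂ ≤ log T₂₁ :=
    mul_log_add_mul_log_le_log (mul_nonneg hε.le (sub_nonneg.2 hα1)) (by nlinarith) hT₁ hT₂
      (by rw [hT₂₁, add_assoc]; exact le_add_of_nonneg_left (mul_nonneg hcoef (sq_nonneg _)))
  linear_combination ε * hlog₁₂ + hlog₂₁

theorem log_temperature_inequality
    (m₁ m₂ ε α γ δ T₁ T₂ : ℝ)
    (hm₁ : 0 < m₁) (hm₂ : 0 < m₂)
    (hε : 0 < ε) (hε1 : ε ≤ 1)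
    (hα0 : 0 ≤ α) (hα1 : α ≤ 1)
    (hγ0 : 0 ≤ γ)
    (hγ : γ ≤ (m₁ / 3) * (1 - δ) * ((1 + (m₁ / m₂) * ε) * δ + 1 - (m₁ / m₂) * ε))
    (hT₁ : 0 < T₁) (hT₂ : 0 < T₂)
    (u₁ u₂ : EuclideanSpace ℝ (Fin 3))
    (T₁₂ T₂₁ : ℝ)
    (hT₁₂ : T₁₂ = α * T₁ + (1 - α) * T₂ + γ * ‖u₁ - u₂‖^2)
    (hT₂₁ : T₂₁ = ((1/3) * ε * m₁ * (1 - δ) * ((m₁ / m₂) * ε * (δ - 1) + δ + 1) - ε * γ)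
        * ‖u₁ - u₂‖^2 + ε * (1 - α) * T₁ + (1 - ε * (1 - α)) * T₂) :
    ε * Real.log T₁ + Real.log T₂ ≤ ε * Real.log T₁₂ + Real.log T₂₁ :=
  log_temperature_inequality_general m₁ m₂ ε α γ δ T₁ T₂ hε hε1 hα0 hα1 hγ0 hγ hT₁ hT₂ u₁ u₂ T₁₂ T₂₁
    hT₁₂ hT₂₁
end

section
/- For 0 < ε ≤ 1, 0 ≤ α ≤ 1 and positive reals T₁, T₂: ε ln(α T₁ + (1−α) T₂) + ln(ε(1−α) T₁ + (1 − ε(1−α)) T₂) ≥ ε ln T₁ + ln T₂. -/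
lemma Real.mul_log_add_one_sub_mul_log_le {a x y : ℝ} (ha₀ : 0 ≤ a) (ha₁ : a ≤ 1)
    (hx : 0 < x) (hy : 0 < y) :
    a * Real.log x + (1 - a) * Real.log y ≤ Real.log (a * x + (1 - a) * y) := by
  simpa using strictConcaveOn_log_Ioi.concaveOn.2 (Set.mem_Ioi.mpr hx) (Set.mem_Ioi.mpr hy)
    ha₀ (sub_nonneg.mpr ha₁) (add_sub_cancel a 1)

theorem log_concavity_estimate
    (ε α T₁ T₂ : ℝ)
    (hε : 0 < ε) (hε1 : ε ≤ 1)
    (hα0 : 0 ≤ α) (hα1 : α ≤ 1)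
    (hT₁ : 0 < T₁) (hT₂ : 0 < T₂) :
    ε * Real.log T₁ + Real.log T₂ ≤
      ε * Real.log (α * T₁ + (1 - α) * T₂) +
        Real.log (ε * (1 - α) * T₁ + (1 - ε * (1 - α)) * T₂) := by
  have hα' : 0 ≤ 1 - α := sub_nonneg.mpr hα1
  have h₁ := Real.mul_log_add_one_sub_mul_log_le hα0 hα1 hT₁ hT₂
  have h₂ := Real.mul_log_add_one_sub_mul_log_le (mul_nonneg hε.le hα')
    (mul_le_one₀ hε1 hα' (by linarith)) hT₁ hT₂
  have h₁ε := mul_le_mul_of_nonneg_left h₁ hε.le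
  linear_combination h₁ε + h₂
end

section
/- Let f : ℝ³ → ℝ>0 and M : ℝ³ → ℝ>0 be integrable with ∫ M dv = ∫ f dv and with f ln f, M ln M integrable. Then ∫ (ln f)(M − f) dv ≤ ∫ M ln M dv − ∫ f ln f dv, with equality if and only if f = M almost everywhere. -/
/-!
The pointwise gap `M ln M - f ln f + f - M - (ln f)(M - f)` equals `f · klFun (M / f) ≥ 0` and
vanishes exactly where `f = M`; since `∫ f = ∫ M`, its integral is the difference of the two sides.
-/

open MeasureTheory InformationTheory Real

/-- The Bregman divergence of `x ↦ x log x - x` at `b` relative to `a`. -/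
noncomputable def entropyBregman (a b : ℝ) : ℝ := b * log b - a * log a + a - b - log a * (b - a)

lemma entropyBregman_eq_mul_klFun {a b : ℝ} (ha : 0 < a) (hb : 0 < b) :
    entropyBregman a b = a * klFun (b / a) := by
  rw [entropyBregman, klFun_apply, log_div hb.ne' ha.ne']
  field_simp
  ring

lemma entropyBregman_nonneg {a b : ℝ} (ha : 0 < a) (hb : 0 < b) : 0 ≤ entropyBregman a b := by
  rw [entropyBregman_eq_mul_klFun ha hb]
  exact mul_nonneg ha.le (klFun_nonneg (div_pos hb ha).le)

lemma entropyBregman_eq_zero_iff {a b : ℝ} (ha : 0 < a) (hb : 0 < b) :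
    entropyBregman a b = 0 ↔ a = b := by
  rw [entropyBregman_eq_mul_klFun ha hb, mul_eq_zero, klFun_eq_zero_iff (div_pos hb ha).le,
    div_eq_one_iff_eq ha.ne']
  simp [ha.ne', eq_comm]

section

variable {α : Type*} [MeasurableSpace α] {μ : Measure α} {f M : α → ℝ}

lemma integrable_entropyBregman (hf_int : Integrable f μ) (hM_int : Integrable M μ)
    (hf_ent : Integrable (fun v => f v * log (f v)) μ)
    (hM_ent : Integrable (fun v => M v * log (M v)) μ)
    (hS_int : Integrable (fun v => log (f v) * (M v - f v)) μ) :
    Integrable (fun v => entropyBregman (f v) (M v)) μ :=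
  (((hM_ent.sub hf_ent).add hf_int).sub hM_int).sub hS_int

lemma integral_entropyBregman (hf_int : Integrable f μ) (hM_int : Integrable M μ)
    (hf_ent : Integrable (fun v => f v * log (f v)) μ)
    (hM_ent : Integrable (fun v => M v * log (M v)) μ)
    (hS_int : Integrable (fun v => log (f v) * (M v - f v)) μ)
    (h0 : ∫ v, M v ∂μ = ∫ v, f v ∂μ) :
    ∫ v, entropyBregman (f v) (M v) ∂μ =
      (∫ v, M v * log (M v) ∂μ) - (∫ v, f v * log (f v) ∂μ) -
        ∫ v, log (f v) * (M v - f v) ∂μ := by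
  have hD : Integrable (fun v => M v * log (M v) - f v * log (f v)) μ := hM_ent.sub hf_ent
  have hDf : Integrable (fun v => M v * log (M v) - f v * log (f v) + f v) μ := hD.add hf_int
  have hDfM : Integrable (fun v => M v * log (M v) - f v * log (f v) + f v - M v) μ :=
    hDf.sub hM_int
  simp only [entropyBregman]
  rw [integral_sub hDfM hS_int, integral_sub hDf hM_int, integral_add hD hf_int,
    integral_sub hM_ent hf_ent, h0]
  ring

theorem integral_log_mul_sub_le (hf_int : Integrable f μ) (hM_int : Integrable M μ)
    (hf_ent : Integrable (fun v => f v * log (f v)) μ)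
    (hM_ent : Integrable (fun v => M v * log (M v)) μ)
    (hS_int : Integrable (fun v => log (f v) * (M v - f v)) μ)
    (hf : ∀ᵐ v ∂μ, 0 < f v) (hM : ∀ᵐ v ∂μ, 0 < M v) (h0 : ∫ v, M v ∂μ = ∫ v, f v ∂μ) :
    ∫ v, log (f v) * (M v - f v) ∂μ ≤
      (∫ v, M v * log (M v) ∂μ) - ∫ v, f v * log (f v) ∂μ := by
  have hintegral_nonneg : 0 ≤ ∫ v, entropyBregman (f v) (M v) ∂μ := by
    refine integral_nonneg_of_ae ?_
    filter_upwards [hf, hM] with v hfv hMv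
    exact entropyBregman_nonneg hfv hMv
  linarith [integral_entropyBregman hf_int hM_int hf_ent hM_ent hS_int h0]

theorem integral_log_mul_sub_eq_iff (hf_int : Integrable f μ) (hM_int : Integrable M μ)
    (hf_ent : Integrable (fun v => f v * log (f v)) μ)
    (hM_ent : Integrable (fun v => M v * log (M v)) μ)
    (hS_int : Integrable (fun v => log (f v) * (M v - f v)) μ)
    (hf : ∀ᵐ v ∂μ, 0 < f v) (hM : ∀ᵐ v ∂μ, 0 < M v) (h0 : ∫ v, M v ∂μ = ∫ v, f v ∂μ) :
    ∫ v, log (f v) * (M v - f v) ∂μ =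
        (∫ v, M v * log (M v) ∂μ) - (∫ v, f v * log (f v) ∂μ) ↔ f =ᵐ[μ] M := by
  have hgap_nonneg : 0 ≤ᵐ[μ] fun v => entropyBregman (f v) (M v) := by
    filter_upwards [hf, hM] with v hfv hMv
    exact entropyBregman_nonneg hfv hMv
  calc _ ↔ ∫ v, entropyBregman (f v) (M v) ∂μ = 0 := by
        rw [integral_entropyBregman hf_int hM_int hf_ent hM_ent hS_int h0, sub_eq_zero, eq_comm]
    _ ↔ (fun v => entropyBregman (f v) (M v)) =ᵐ[μ] 0 :=
        integral_eq_zero_iff_of_nonneg_ae hgap_nonneg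
          (integrable_entropyBregman hf_int hM_int hf_ent hM_ent hS_int)
    _ ↔ f =ᵐ[μ] M := by
        refine ⟨fun h => ?_, fun h => ?_⟩ <;> filter_upwards [h, hf, hM] with v hv hfv hMv
        · exact (entropyBregman_eq_zero_iff hfv hMv).1 hv
        · exact (entropyBregman_eq_zero_iff hfv hMv).2 hv

end

theorem entropy_dissipation_step
    (f M : EuclideanSpace ℝ (Fin 3) → ℝ)
    (hf : ∀ v, 0 < f v) (hM : ∀ v, 0 < M v)
    (hf_int : Integrable f) (hM_int : Integrable M)
    (hf_ent : Integrable (fun v => f v * Real.log (f v)))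
    (hM_ent : Integrable (fun v => M v * Real.log (M v)))
    (hS_int : Integrable (fun v => Real.log (f v) * (M v - f v)))
    (h0 : (∫ v, M v) = ∫ v, f v) :
    (∫ v, Real.log (f v) * (M v - f v)) ≤
      (∫ v, M v * Real.log (M v)) - ∫ v, f v * Real.log (f v) ∧
    ((∫ v, Real.log (f v) * (M v - f v)) =
        (∫ v, M v * Real.log (M v)) - (∫ v, f v * Real.log (f v)) ↔
      f =ᵐ[volume] M) :=
  ⟨integral_log_mul_sub_le hf_int hM_int hf_ent hM_ent hS_int (ae_of_all _ hf) (ae_of_all _ hM) h0,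
    integral_log_mul_sub_eq_iff hf_int hM_int hf_ent hM_ent hS_int (ae_of_all _ hf)
      (ae_of_all _ hM) h0⟩
end

section
/- In Hamel's model, the choices ε = 1, δ = m₁/(m₁+m₂), α = (m₁² + m₂²)/(m₁+m₂)², γ = (m₁ m₂/(m₁+m₂)²)(m₂/3) satisfy the positivity conditions: α ≥ 1 − 1/ε = 0, α ∈ [0,1], γ ≥ 0, and γ ≤ (m₁/3)(1−δ)[(1 + (m₁/m₂)ε)δ + 1 − (m₁/m₂)ε]. -/
/-! With `δ = m₁/(m₁+m₂)` and `ε = 1` the bracket `(1 + (m₁/m₂)ε)δ + 1 - (m₁/m₂)ε` equals `1`,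
so the upper bound for `γ` is `(m₁/3) · m₂/(m₁+m₂)`, and `γ` is this bound times the fraction
`m₂/(m₁+m₂) ≤ 1`. The bounds on `α` follow from `α = 1 - 2m₁m₂/(m₁+m₂)²`. -/

lemma one_sub_div_add_self {a b : ℝ} (h : a + b ≠ 0) : 1 - a / (a + b) = b / (a + b) := by
  field_simp
  ring

lemma one_add_div_mul_div_add_sub_div {a b : ℝ} (hb : b ≠ 0) (h : a + b ≠ 0) :
    (1 + a / b) * (a / (a + b)) + 1 - a / b = 1 := by
  field_simp
  ring

lemma sq_add_sq_div_sq_add_eq {a b : ℝ} (h : a + b ≠ 0) :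
    (a ^ 2 + b ^ 2) / (a + b) ^ 2 = 1 - 2 * (a * b) / (a + b) ^ 2 := by
  field_simp
  ring

lemma div_add_le_one_of_nonneg {a b : ℝ} (ha : 0 ≤ a) (hb : 0 ≤ b) : b / (a + b) ≤ 1 :=
  div_le_one_of_le₀ (by linarith) (by positivity)

theorem hamel_model_conditions
    (m₁ m₂ : ℝ) (hm₁ : 0 < m₁) (hm₂ : 0 < m₂)
    (ε δ α γ : ℝ)
    (hε : ε = 1)
    (hδ : δ = m₁ / (m₁ + m₂))
    (hα : α = (m₁^2 + m₂^2) / (m₁ + m₂)^2)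
    (hγ : γ = (m₁ * m₂ / (m₁ + m₂)^2) * (m₂ / 3)) :
    1 - 1/ε ≤ α ∧ 0 ≤ α ∧ α ≤ 1 ∧ 0 ≤ γ ∧
    γ ≤ (m₁ / 3) * (1 - δ) * ((1 + (m₁ / m₂) * ε) * δ + 1 - (m₁ / m₂) * ε) := by
  subst hε hδ hα hγ
  have hs : m₁ + m₂ ≠ 0 := by positivity
  have hα_le : (m₁ ^ 2 + m₂ ^ 2) / (m₁ + m₂) ^ 2 ≤ 1 := by
    rw [sq_add_sq_div_sq_add_eq hs, sub_le_self_iff]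
    positivity
  have hγ_eq : m₁ * m₂ / (m₁ + m₂) ^ 2 * (m₂ / 3) =
      m₁ / 3 * (m₂ / (m₁ + m₂)) * (m₂ / (m₁ + m₂)) := by
    field_simp
  refine ⟨by norm_num; positivity, by positivity, hα_le, by positivity, ?_⟩
  rw [mul_one, one_sub_div_add_self hs, one_add_div_mul_div_add_sub_div hm₂.ne' hs, mul_one,
    hγ_eq]
  exact mul_le_of_le_one_right (by positivity) (div_add_le_one_of_nonneg hm₁.le hm₂.le)
end
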